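/- arXiv:2408.17396 — 3 statements merged into one kernel-verified Lean document; each statement's English description precedes it below -/
import Mathlib

section
/- The gradient of the Ising pseudolikelihood loss L(Θ;X) is Lipschitz continuous with Lipschitz constant at most N·P², i.e., for all symmetric Θ, Φ: ‖∇L(Θ;X) - ∇L(Φ;X)‖_F ≤ N·P²·‖Θ - Φ‖_F. -/
/-!
The loss is `-⟪XᵀX, Θ⟫ + ∑ᵢⱼ log (1 + exp ⟪Eᵢⱼ, Θ⟫)`, where `Eᵢⱼ` is the matrix whose only
nonzero row is row `j`, equal to `xᵢ` with its `j`-th entry replaced by `1`. Hence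
`∇L(Θ) = -XᵀX + ∑ᵢⱼ σ⟪Eᵢⱼ, Θ⟫ Eᵢⱼ` with `σ` the sigmoid. As `σ` is `1`-Lipschitz and the
entries of `Eᵢⱼ` lie in `[-1, 1]`, every entry of `∇L(Θ) - ∇L(Φ)` has absolute value at most
`N ∑ₗ |(Θ - Φ)ⱼₗ| ≤ N P ‖Θ - Φ‖`, and a `P × P` matrix with entries bounded by `c` has
Frobenius norm at most `P c`.
-/

open Matrix

attribute [local instance] Matrix.frobeniusNormedAddCommGroup Matrix.frobeniusNormedSpace

open Real

namespace Real

lemma lipschitzWith_sigmoid : LipschitzWith 1 sigmoid := by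
  refine lipschitzWith_of_nnnorm_deriv_le differentiable_sigmoid fun x => ?_
  rw [← NNReal.coe_le_coe, coe_nnnorm, deriv_sigmoid, norm_mul, NNReal.coe_one]
  have h0 := sigmoid_nonneg x
  have h1 := sigmoid_le_one x
  rw [norm_of_nonneg h0, norm_of_nonneg (by linarith)]
  nlinarith

lemma hasDerivAt_log_one_add_exp (x : ℝ) :
    HasDerivAt (fun t => log (1 + exp t)) (sigmoid x) x := by
  convert ((hasDerivAt_exp x).const_add 1).log (by positivity) using 1
  rw [sigmoid_def, exp_neg]
  field_simp
  ring

end Real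

namespace Matrix

variable {m n α : Type*} [Fintype m] [Fintype n]

lemma frobenius_norm_entry_le [NormedAddCommGroup α] (A : Matrix m n α) (i : m) (j : n) :
    ‖A i j‖ ≤ ‖A‖ :=
  (PiLp.norm_apply_le (WithLp.toLp 2 (A i)) j).trans
    (PiLp.norm_apply_le (WithLp.toLp 2 fun i => WithLp.toLp 2 (A i)) i)

lemma frobenius_norm_le_of_forall_norm_entry_le [NormedAddCommGroup α] {A : Matrix m n α}
    {c : ℝ} (hc : 0 ≤ c) (hA : ∀ i j, ‖A i j‖ ≤ c) :
    ‖A‖ ≤ √(Fintype.card m * Fintype.card n) * c := by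
  calc ‖A‖ = √(∑ i, ∑ j, ‖A i j‖ ^ 2) := by
        simp only [frobenius_norm_def, Real.rpow_two, Real.sqrt_eq_rpow]
    _ ≤ √(∑ _i : m, ∑ _j : n, c ^ 2) := by gcongr with i _ j _; exact hA i j
    _ = √(Fintype.card m * Fintype.card n) * c := by
        simp only [Finset.sum_const, Finset.card_univ, nsmul_eq_mul, ← mul_assoc]
        rw [Real.sqrt_mul (by positivity), Real.sqrt_sq hc]

noncomputable def frobeniusInner : Matrix m n ℝ →ₗ[ℝ] Matrix m n ℝ →L[ℝ] ℝ :=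
  (LinearMap.toContinuousLinearMap : (Matrix m n ℝ →ₗ[ℝ] ℝ) ≃ₗ[ℝ] _).toLinearMap ∘ₗ
    LinearMap.mk₂ ℝ (fun G H => ∑ i, ∑ j, G i j * H i j)
      (by simp [add_mul, Finset.sum_add_distrib]) (by simp [mul_assoc, Finset.mul_sum])
      (by simp [mul_add, Finset.sum_add_distrib]) (by simp [mul_left_comm, Finset.mul_sum])

lemma frobeniusInner_apply (G H : Matrix m n ℝ) :
    frobeniusInner G H = ∑ i, ∑ j, G i j * H i j := rfl

lemma frobeniusInner_apply_eq_trace (G H : Matrix m n ℝ) :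
    frobeniusInner G H = (Gᵀ * H).trace := by
  simp only [frobeniusInner_apply, trace, diag, mul_apply, transpose_apply]
  exact Finset.sum_comm

lemma frobeniusInner_single_one [DecidableEq m] [DecidableEq n] (G : Matrix m n ℝ) (i : m) (j : n) :
    frobeniusInner G (single i j 1) = G i j := by
  simp [frobeniusInner_apply, single_apply, ite_and]

lemma frobeniusInner_injective :
    Function.Injective (frobeniusInner : Matrix m n ℝ →ₗ[ℝ] _) := fun A B h => by
  classical
  ext i j
  simpa only [frobeniusInner_single_one] using congr($h (single i j 1))

lemma frobeniusInner_updateRow_zero [DecidableEq m] (i : m) (v : n → ℝ) (H : Matrix m n ℝ) :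
    frobeniusInner (updateRow 0 i v) H = H i ⬝ᵥ v := by
  simp [frobeniusInner_apply, updateRow_apply, dotProduct, mul_comm]

end Matrix

section DotProduct

variable {n : Type*} [Fintype n]

lemma dotProduct_update_one {R : Type*} [DecidableEq n] [CommSemiring R]
    (w v : n → R) (j : n) :
    w ⬝ᵥ Function.update v j 1 = w j + ∑ k ∈ Finset.univ.erase j, w k * v k := by
  rw [dotProduct, ← Finset.add_sum_erase _ _ (Finset.mem_univ j), Function.update_self, mul_one]
  congr 1
  refine Finset.sum_congr rfl fun k hk => ?_
  rw [Function.update_of_ne (Finset.ne_of_mem_erase hk)]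

lemma abs_dotProduct_le_sum_abs {w v : n → ℝ} (hv : ∀ l, |v l| ≤ 1) :
    |w ⬝ᵥ v| ≤ ∑ l, |w l| :=
  (Finset.abs_sum_le_sum_abs _ _).trans <| Finset.sum_le_sum fun l _ => by
    rw [abs_mul]
    exact mul_le_of_le_one_right (abs_nonneg _) (hv l)

end DotProduct

lemma abs_update_one_le_one {n : Type*} [DecidableEq n] {v : n → ℝ} (hv : ∀ l, |v l| ≤ 1)
    (k l : n) :
    |Function.update v k 1 l| ≤ 1 := by
  rcases eq_or_ne l k with rfl | h
  · simp
  · simpa [h] using hv l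

section Ising

variable {m n : Type*} [Fintype m] [Fintype n] [DecidableEq n]

noncomputable def isingLoss (X : Matrix m n ℝ) (Θ : Matrix n n ℝ) : ℝ :=
  -(∑ j, ∑ j', Θ j j' * (Xᵀ * X) j j') +
    ∑ i, ∑ j, log (1 + exp (Θ j j + ∑ j' ∈ Finset.univ.erase j, Θ j j' * X i j'))

def isingFeature (X : Matrix m n ℝ) (i : m) (j : n) : Matrix n n ℝ :=
  updateRow 0 j (Function.update (X i) j 1)

noncomputable def isingGrad (X : Matrix m n ℝ) (Θ : Matrix n n ℝ) : Matrix n n ℝ :=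
  -(Xᵀ * X) + ∑ i, ∑ j, sigmoid (frobeniusInner (isingFeature X i j) Θ) • isingFeature X i j

lemma isingLoss_eq (X : Matrix m n ℝ) (Θ : Matrix n n ℝ) :
    isingLoss X Θ = -frobeniusInner (Xᵀ * X) Θ +
      ∑ i, ∑ j, log (1 + exp (frobeniusInner (isingFeature X i j) Θ)) := by
  simp only [isingLoss, isingFeature, frobeniusInner_updateRow_zero, dotProduct_update_one]
  simp only [frobeniusInner_apply, mul_comm]

lemma hasFDerivAt_isingLoss (X : Matrix m n ℝ) (Θ : Matrix n n ℝ) :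
    HasFDerivAt (isingLoss X) (frobeniusInner (isingGrad X Θ)) Θ := by
  have hsoftplus : ∀ i j, HasFDerivAt
      (fun Θ => log (1 + exp (frobeniusInner (isingFeature X i j) Θ)))
      (sigmoid (frobeniusInner (isingFeature X i j) Θ) •
        frobeniusInner (isingFeature X i j)) Θ := fun i j =>
    (hasDerivAt_log_one_add_exp _).comp_hasFDerivAt Θ (ContinuousLinearMap.hasFDerivAt _)
  rw [funext (isingLoss_eq X), isingGrad]
  simp only [map_add, map_neg, map_sum, map_smul]
  exact (frobeniusInner (Xᵀ * X)).hasFDerivAt.fun_neg.fun_add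
    (HasFDerivAt.fun_sum fun i _ => HasFDerivAt.fun_sum fun j _ => hsoftplus i j)

lemma isingGrad_sub_apply (X : Matrix m n ℝ) (Θ Φ : Matrix n n ℝ) (k l : n) :
    (isingGrad X Θ - isingGrad X Φ) k l = ∑ i,
      (sigmoid (Θ k ⬝ᵥ Function.update (X i) k 1) -
        sigmoid (Φ k ⬝ᵥ Function.update (X i) k 1)) * Function.update (X i) k 1 l := by
  simp [isingGrad, isingFeature, frobeniusInner_updateRow_zero, Matrix.sum_apply, updateRow_apply,
    sub_mul, Finset.sum_sub_distrib]

lemma abs_isingGrad_sub_apply_le {X : Matrix m n ℝ} (hX : ∀ i j, |X i j| ≤ 1)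
    (Θ Φ : Matrix n n ℝ) (k l : n) :
    |(isingGrad X Θ - isingGrad X Φ) k l| ≤
      Fintype.card m * (Fintype.card n * ‖Θ - Φ‖) := by
  rw [isingGrad_sub_apply]
  refine (Finset.abs_sum_le_sum_abs _ _).trans ?_
  calc _ ≤ ∑ _i : m, (Fintype.card n * ‖Θ - Φ‖) := Finset.sum_le_sum fun i _ => ?_
    _ = _ := by simp
  set v := Function.update (X i) k 1
  have hv : ∀ l, |v l| ≤ 1 := abs_update_one_le_one (hX i) k
  calc |(sigmoid (Θ k ⬝ᵥ v) - sigmoid (Φ k ⬝ᵥ v)) * v l|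
      ≤ |sigmoid (Θ k ⬝ᵥ v) - sigmoid (Φ k ⬝ᵥ v)| := by
        rw [abs_mul]; exact mul_le_of_le_one_right (abs_nonneg _) (hv l)
    _ ≤ |(Θ k - Φ k) ⬝ᵥ v| := by
        simpa [dist_eq, sub_dotProduct] using
          lipschitzWith_sigmoid.dist_le_mul (Θ k ⬝ᵥ v) (Φ k ⬝ᵥ v)
    _ ≤ ∑ l, |(Θ - Φ) k l| := abs_dotProduct_le_sum_abs hv
    _ ≤ ∑ _l : n, ‖Θ - Φ‖ := Finset.sum_le_sum fun l _ => frobenius_norm_entry_le (Θ - Φ) k l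
    _ = Fintype.card n * ‖Θ - Φ‖ := by simp

lemma norm_isingGrad_sub_le {X : Matrix m n ℝ} (hX : ∀ i j, |X i j| ≤ 1) (Θ Φ : Matrix n n ℝ) :
    ‖isingGrad X Θ - isingGrad X Φ‖ ≤ Fintype.card m * Fintype.card n ^ 2 * ‖Θ - Φ‖ := by
  have h := frobenius_norm_le_of_forall_norm_entry_le (by positivity) fun k l =>
    (norm_eq_abs _).trans_le (abs_isingGrad_sub_apply_le hX Θ Φ k l)
  rw [sqrt_mul_self (Nat.cast_nonneg _)] at h
  linarith

end Ising

/-- The gradient (w.r.t. the Frobenius inner product) of the Ising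
pseudolikelihood loss is Lipschitz continuous with constant at most `N·P²`:
`‖∇L(Θ;X) - ∇L(Φ;X)‖_F ≤ N·P²·‖Θ - Φ‖_F` for all symmetric `Θ, Φ`. -/
theorem ising_gradient_lipschitz
    (N P : ℕ) (X : Matrix (Fin N) (Fin P) ℝ) (hX : ∀ i j, X i j = 0 ∨ X i j = 1)
    (L : Matrix (Fin P) (Fin P) ℝ → ℝ)
    (hL : L = fun Θ : Matrix (Fin P) (Fin P) ℝ =>
      -(∑ j, ∑ j', Θ j j' * (Xᵀ * X) j j') +
        ∑ i, ∑ j, Real.log (1 + Real.exp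
          (Θ j j + ∑ j' ∈ Finset.univ.erase j, Θ j j' * X i j')))
    (gradL : Matrix (Fin P) (Fin P) ℝ → Matrix (Fin P) (Fin P) ℝ)
    (hgrad : ∀ Θ : Matrix (Fin P) (Fin P) ℝ,
      DifferentiableAt ℝ L Θ ∧
      ∀ H : Matrix (Fin P) (Fin P) ℝ, fderiv ℝ L Θ H = ((gradL Θ)ᵀ * H).trace) :
    ∀ Θ Φ : Matrix (Fin P) (Fin P) ℝ, Θ.IsSymm → Φ.IsSymm →
      ‖gradL Θ - gradL Φ‖ ≤ (N : ℝ) * (P : ℝ)^2 * ‖Θ - Φ‖ := by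
  intro Θ Φ _ _
  have hX_abs : ∀ i j, |X i j| ≤ 1 := fun i j => by rcases hX i j with h | h <;> simp [h]
  have hL_eq : L = isingLoss X := hL
  have hgradL : ∀ Θ, gradL Θ = isingGrad X Θ := fun Θ => frobeniusInner_injective <| by
    ext H
    rw [frobeniusInner_apply_eq_trace, ← (hgrad Θ).2 H, hL_eq, (hasFDerivAt_isingLoss X Θ).fderiv]
  rw [hgradL, hgradL]
  simpa using norm_isingGrad_sub_le hX_abs Θ Φ
end

section
/- Under the proximal gradient update of the multi-objective method, each objective is monotonically non-increasing: if Θ^{(t+1)} minimizes φ_ℓ(·; Θ^{(t)}) with ℓ > L, then F_k(Θ^{(t+1)}) ≤ F_k(Θ^{(t)}) for every k = 1,…,M. -/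
/-!
Taking `Φ = Θ` in the minimality of `Θ'` gives `φ_ℓ(Θ'; Θ) ≤ φ_ℓ(Θ; Θ) = 0`. On the other hand
the descent lemma, applied to each `f_k` and combined with `⟨∇f_k(Θ), d⟩ ≤ max_j ⟨∇f_j(Θ), d⟩`
and `L ≤ ℓ`, bounds `F_k(Θ') - F_k(Θ)` by `φ_ℓ(Θ'; Θ)`.
-/

open Matrix
open scoped NNReal

attribute [local instance] Matrix.frobeniusNormedAddCommGroup Matrix.frobeniusNormedSpace

section DescentLemma

variable {E : Type*} [NormedAddCommGroup E] [NormedSpace ℝ E] {f : E → ℝ} {L : ℝ≥0}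

lemma LipschitzWith.fderiv_apply_sub_le (hlip : LipschitzWith L (fderiv ℝ f)) (x y v : E) :
    fderiv ℝ f y v - fderiv ℝ f x v ≤ L * ‖y - x‖ * ‖v‖ := by
  rw [← _root_.sub_apply]
  calc (fderiv ℝ f y - fderiv ℝ f x) v
      ≤ ‖fderiv ℝ f y - fderiv ℝ f x‖ * ‖v‖ :=
        (le_abs_self _).trans ((fderiv ℝ f y - fderiv ℝ f x).le_opNorm v)
    _ ≤ L * ‖y - x‖ * ‖v‖ := by
      gcongr
      simpa only [dist_eq_norm] using hlip.dist_le_mul y x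

theorem Differentiable.image_le_of_lipschitzWith_fderiv (hf : Differentiable ℝ f)
    (hlip : LipschitzWith L (fderiv ℝ f)) (x y : E) :
    f y ≤ f x + fderiv ℝ f x (y - x) + L / 2 * ‖y - x‖ ^ 2 := by
  set v := y - x
  -- `φ t = f (x + t v)` minus its quadratic model at `0` is antitone on `[0, ∞)`.
  let φ : ℝ → ℝ := fun t ↦ f (x + t • v) - t * fderiv ℝ f x v - L / 2 * t ^ 2 * ‖v‖ ^ 2
  have hφ' : ∀ t, HasDerivAt φ
      (fderiv ℝ f (x + t • v) v - fderiv ℝ f x v - L * t * ‖v‖ ^ 2) t := by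
    intro t
    have hline : HasDerivAt (fun t : ℝ ↦ x + t • v) v t := by
      simpa using ((hasDerivAt_id t).smul_const v).const_add x
    have := (((hf _).hasFDerivAt.comp_hasDerivAt t hline).sub
      ((hasDerivAt_id t).mul_const (fderiv ℝ f x v))).sub
      (((hasDerivAt_pow 2 t).const_mul (L / 2 : ℝ)).mul_const (‖v‖ ^ 2))
    refine this.congr_deriv ?_
    simp only [one_mul, Nat.cast_ofNat, Nat.add_one_sub_one, pow_one]
    ring
  have hanti : AntitoneOn φ (Set.Ici 0) := by
    refine antitoneOn_of_hasDerivWithinAt_nonpos (convex_Ici 0)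
      (fun t _ ↦ (hφ' t).continuousAt.continuousWithinAt)
      (fun t _ ↦ (hφ' t).hasDerivWithinAt) fun t ht ↦ ?_
    rw [interior_Ici] at ht
    have := hlip.fderiv_apply_sub_le x (x + t • v) v
    rw [add_sub_cancel_left, norm_smul, Real.norm_of_nonneg (le_of_lt ht)] at this
    nlinarith
  have h01 : φ 1 ≤ φ 0 := hanti Set.self_mem_Ici (Set.mem_Ici.2 zero_le_one) zero_le_one
  simp only [φ, zero_smul, add_zero, one_smul, zero_mul, sub_zero, one_mul, v,
    add_sub_cancel, one_pow, ne_eq, OfNat.ofNat_ne_zero, not_false_eq_true, zero_pow,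
    mul_zero] at h01
  linarith

end DescentLemma

section ProxModel

variable {ι E : Type*} [NormedAddCommGroup E] [NormedSpace ℝ E]

/-- The paper's `φ_ℓ(Φ; Θ)`. -/
noncomputable def proxModel (f : ι → E → ℝ) (g : E → ℝ) (ℓ : ℝ) (Θ Φ : E) : ℝ :=
  (⨆ k, fderiv ℝ (f k) Θ (Φ - Θ)) + g Φ - g Θ + ℓ / 2 * ‖Φ - Θ‖ ^ 2

@[simp]
lemma proxModel_self (f : ι → E → ℝ) (g : E → ℝ) (ℓ : ℝ) (Θ : E) : proxModel f g ℓ Θ Θ = 0 := by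
  simp [proxModel, Real.iSup_const_zero]

lemma le_add_proxModel [Finite ι] {f : ι → E → ℝ} {L : ℝ≥0} (hf : ∀ k, Differentiable ℝ (f k))
    (hlip : ∀ k, LipschitzWith L (fderiv ℝ (f k))) (g : E → ℝ) {ℓ : ℝ} (hℓ : L ≤ ℓ) (k : ι)
    (Θ Φ : E) : f k Φ + g Φ ≤ f k Θ + g Θ + proxModel f g ℓ Θ Φ := by
  have hdescent := (hf k).image_le_of_lipschitzWith_fderiv (hlip k) Θ Φ
  have hmax : fderiv ℝ (f k) Θ (Φ - Θ) ≤ ⨆ j, fderiv ℝ (f j) Θ (Φ - Θ) :=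
    le_ciSup (Finite.bddAbove_range fun j ↦ fderiv ℝ (f j) Θ (Φ - Θ)) k
  have hquad : (L : ℝ) / 2 * ‖Φ - Θ‖ ^ 2 ≤ ℓ / 2 * ‖Φ - Θ‖ ^ 2 := by gcongr
  unfold proxModel
  linarith

end ProxModel

theorem prox_update_monotone_decrease_general
    (P M : ℕ)
    (f : Fin M → Matrix (Fin P) (Fin P) ℝ → ℝ) (g : Matrix (Fin P) (Fin P) ℝ → ℝ)
    (Mset : Set (Matrix (Fin P) (Fin P) ℝ))
    (L : ℝ≥0) (hf : ∀ k, Differentiable ℝ (f k))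
    (hlip : ∀ k, @LipschitzWith _ _ _ (ContinuousLinearMap.toSeminormedAddCommGroup :
      SeminormedAddCommGroup (Matrix (Fin P) (Fin P) ℝ →L[ℝ] ℝ)).toPseudoEMetricSpace L (fderiv ℝ (f k)))
    (ℓ : ℝ) (hℓ : (L : ℝ) < ℓ)
    (Θ Θ' : Matrix (Fin P) (Fin P) ℝ) (hΘ : Θ ∈ Mset)
    (hmin : ∀ Φ ∈ Mset,
      (⨆ k : Fin M, fderiv ℝ (f k) Θ (Θ' - Θ)) + g Θ' - g Θ + ℓ/2 * ‖Θ' - Θ‖^2 ≤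
      (⨆ k : Fin M, fderiv ℝ (f k) Θ (Φ - Θ)) + g Φ - g Θ + ℓ/2 * ‖Φ - Θ‖^2) :
    ∀ k : Fin M, f k Θ' + g Θ' ≤ f k Θ + g Θ := by
  intro k
  have hstep : proxModel f g ℓ Θ Θ' ≤ 0 := proxModel_self f g ℓ Θ ▸ hmin Θ hΘ
  linarith [le_add_proxModel hf hlip g hℓ.le k Θ Θ']

/-- Monotone decrease of each objective under the multi-objective proximal
gradient update: if `Θ'` minimizes `φ_ℓ(·; Θ)` over the convex set `M` with `ℓ > L`, where
`φ_ℓ(Φ;Θ) = max_k ⟨∇f_k(Θ), Φ-Θ⟩ + g(Φ) - g(Θ) + (ℓ/2)‖Φ-Θ‖_F²`, then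
`F_k(Θ') ≤ F_k(Θ)` for every `k`, where `F_k = f_k + g`. -/
theorem prox_update_monotone_decrease
    (P M : ℕ)
    (f : Fin M → Matrix (Fin P) (Fin P) ℝ → ℝ) (g : Matrix (Fin P) (Fin P) ℝ → ℝ)
    (Mset : Set (Matrix (Fin P) (Fin P) ℝ)) (hMconv : Convex ℝ Mset)
    (hg : ConvexOn ℝ Set.univ g)
    (L : ℝ≥0) (hf : ∀ k, Differentiable ℝ (f k))
    (hlip : ∀ k, @LipschitzWith _ _ _ (ContinuousLinearMap.toSeminormedAddCommGroup :
      SeminormedAddCommGroup (Matrix (Fin P) (Fin P) ℝ →L[ℝ] ℝ)).toPseudoEMetricSpace L (fderiv ℝ (f k)))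
    (ℓ : ℝ) (hℓ : (L : ℝ) < ℓ)
    (Θ Θ' : Matrix (Fin P) (Fin P) ℝ) (hΘ : Θ ∈ Mset) (hΘ' : Θ' ∈ Mset)
    (hmin : ∀ Φ ∈ Mset,
      (⨆ k : Fin M, fderiv ℝ (f k) Θ (Θ' - Θ)) + g Θ' - g Θ + ℓ/2 * ‖Θ' - Θ‖^2 ≤
      (⨆ k : Fin M, fderiv ℝ (f k) Θ (Φ - Θ)) + g Φ - g Θ + ℓ/2 * ‖Φ - Θ‖^2) :
    ∀ k : Fin M, f k Θ' + g Θ' ≤ f k Θ + g Θ :=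
  prox_update_monotone_decrease_general P M f g Mset L hf hlip ℓ hℓ Θ Θ' hΘ hmin
end

section
/- If a sequence (Θ^{(t)}) satisfies Σ_k ρ_k^{(t)}(F_k(Θ^{(t+1)}) - F_k(Θ)) ≤ (ℓ/2)(‖Θ^{(t)} - Θ‖_F² - ‖Θ^{(t+1)} - Θ‖_F²) for all t and all feasible Θ, with ρ^{(t)} in the simplex, and each F_k is non-increasing along the sequence, then for every T ≥ 1 and every feasible Θ: min_{k∈[M]} (F_k(Θ^{(T)}) - F_k(Θ)) ≤ (ℓ/(2T))‖Θ^{(0)} - Θ‖_F². -/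
open Matrix

attribute [local instance] Matrix.frobeniusNormedAddCommGroup Matrix.frobeniusNormedSpace

/-- Telescoping convergence rate. If for all `t` and all feasible `Θ`,
`Σ_k ρ_k^{(t)}(F_k(Θ^{(t+1)}) - F_k(Θ)) ≤ (ℓ/2)(‖Θ^{(t)} - Θ‖² - ‖Θ^{(t+1)} - Θ‖²)` with
`ρ^{(t)}` in the simplex, and each `F_k` is non-increasing along the sequence, then for
every `T ≥ 1` and feasible `Θ`:
`min_k (F_k(Θ^{(T)}) - F_k(Θ)) ≤ (ℓ/(2T))‖Θ^{(0)} - Θ‖²`. -/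
theorem telescoping_convergence_rate
    (P M : ℕ)
    (F : Fin M → Matrix (Fin P) (Fin P) ℝ → ℝ)
    (Mset : Set (Matrix (Fin P) (Fin P) ℝ))
    (Θseq : ℕ → Matrix (Fin P) (Fin P) ℝ) (ρ : ℕ → Fin M → ℝ)
    (hρ : ∀ t k, 0 ≤ ρ t k) (hρsum : ∀ t, ∑ k, ρ t k = 1)
    (ℓ : ℝ) (hℓ : 0 < ℓ)
    (hineq : ∀ t : ℕ, ∀ Θ ∈ Mset,
      ∑ k, ρ t k * (F k (Θseq (t+1)) - F k Θ) ≤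
        ℓ/2 * (‖Θseq t - Θ‖^2 - ‖Θseq (t+1) - Θ‖^2))
    (hmono : ∀ (k : Fin M) (t : ℕ), F k (Θseq (t+1)) ≤ F k (Θseq t)) :
    ∀ T : ℕ, 1 ≤ T → ∀ Θ ∈ Mset,
      ∃ k : Fin M, F k (Θseq T) - F k Θ ≤ ℓ/(2*T) * ‖Θseq 0 - Θ‖^2 := by
  intro T hT Θ hΘ
  by_contra hcon
  push_neg at hcon
  have hT0 : (0:ℝ) < T := by exact_mod_cast hT
  have hmono' : ∀ (k : Fin M) (s t : ℕ), s ≤ t → F k (Θseq t) ≤ F k (Θseq s) := by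
    intro k s t h
    induction t with
    | zero => simp_all
    | succ n ih =>
      rcases Nat.lt_or_ge s (n+1) with h'|h'
      · exact le_trans (hmono k n) (ih (Nat.lt_succ_iff.mp h'))
      · have : s = n+1 := le_antisymm h h'
        simp [this]
  set B := ‖Θseq 0 - Θ‖^2 with hB
  have key : ∑ t ∈ Finset.range T, ∑ k, ρ t k * (F k (Θseq T) - F k Θ) ≤ ℓ/2 * B := by
    have h1 : ∀ t ∈ Finset.range T, ∑ k, ρ t k * (F k (Θseq T) - F k Θ) ≤
        ℓ/2*(‖Θseq t - Θ‖^2 - ‖Θseq (t+1) - Θ‖^2) := by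
      intro t ht
      refine le_trans ?_ (hineq t Θ hΘ)
      apply Finset.sum_le_sum
      intro k _
      have h2 := hmono' k (t+1) T (Finset.mem_range.mp ht)
      nlinarith [hρ t k]
    calc ∑ t ∈ Finset.range T, ∑ k, ρ t k * (F k (Θseq T) - F k Θ)
        ≤ ∑ t ∈ Finset.range T, ℓ/2*(‖Θseq t - Θ‖^2 - ‖Θseq (t+1) - Θ‖^2) :=
          Finset.sum_le_sum h1
      _ = ℓ/2 * (‖Θseq 0 - Θ‖^2 - ‖Θseq T - Θ‖^2) := by
          rw [← Finset.mul_sum, Finset.sum_range_sub' (fun t => ‖Θseq t - Θ‖^2)]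
      _ ≤ ℓ/2 * B := by nlinarith [sq_nonneg ‖Θseq T - Θ‖]
  set w : Fin M → ℝ := fun k => ∑ t ∈ Finset.range T, ρ t k with hw
  have hwsum : ∑ k, w k = T := by
    simp only [hw, Finset.sum_comm, hρsum]
    simp
  have hswap : ∑ t ∈ Finset.range T, ∑ k, ρ t k * (F k (Θseq T) - F k Θ) =
      ∑ k, w k * (F k (Θseq T) - F k Θ) := by
    rw [Finset.sum_comm]
    simp [hw, Finset.sum_mul]
  have hwpos : ∃ k, 0 < w k := by
    have : (0:ℝ) < ∑ k, w k := by rw [hwsum]; exact hT0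
    obtain ⟨k, _, hk⟩ := Finset.exists_lt_of_sum_lt (by simpa using this :
      ∑ k : Fin M, (0:ℝ) < ∑ k, w k)
    exact ⟨k, hk⟩
  obtain ⟨k₀, hk₀⟩ := hwpos
  have hwnn : ∀ k, 0 ≤ w k := fun k => Finset.sum_nonneg fun t _ => hρ t k
  have hlow : ∑ k, w k * (ℓ/(2*T) * B) < ∑ k, w k * (F k (Θseq T) - F k Θ) := by
    apply Finset.sum_lt_sum
    · intro k _
      exact mul_le_mul_of_nonneg_left (hcon k).le (hwnn k)
    · exact ⟨k₀, Finset.mem_univ k₀, mul_lt_mul_of_pos_left (hcon k₀) hk₀⟩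
  have heq : ∑ k, w k * (ℓ/(2*T) * B) = ℓ/2 * B := by
    rw [← Finset.sum_mul, hwsum]
    field_simp
  rw [heq, ← hswap] at hlow
  linarith
end
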